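/- arXiv:2602.14341 — 2 statements merged into one kernel-verified Lean document; each statement's English description precedes it below -/
import Mathlib

section
/- Let W be a manifold, L → W a real line bundle with flat connection ∇, and let η_i ∈ Ω¹(W, L^{-i}) for i = 1, ..., k-1 satisfy the Maurer-Cartan equations d^∇ η_r + (1/2) Σ_{i+j=r} (j-i) η_i ∧ η_j = 0 for all r. Then the twisted 2-form e = (1/2) Σ_{i+j=k} (j-i) η_i ∧ η_j ∈ Ω²(W, L^{-k}) is d^∇-closed. -/
/-!
STATEMENT 6: Let `η_i ∈ Ω¹(W, L^{-i})`, `i = 1, …, k-1`, satisfy the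
Maurer–Cartan equations
`d^∇ η_r + (1/2) ∑_{i+j=r} (j-i) η_i ∧ η_j = 0` for all `r = 1, …, k-1`.
Then the twisted 2-form `e = (1/2) ∑_{i+j=k} (j-i) η_i ∧ η_j ∈ Ω²(W, L^{-k})`
is `d^∇`-closed.

We formalize this in the total twisted de Rham algebra
`⊕_r Ω^•(W, L^{-r})`, modelled as an abstract ℝ-algebra `A` in which the
`η_i` are odd (degree-1) elements — so they pairwise anticommute — and the
flat twisted differential `d` is an ℝ-linear map satisfying the (odd)
Leibniz rule on products of two of the `η`'s.  Note `(j - i) = (r - 2i)`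
when `j = r - i`.
-/

theorem stmt6 (k : ℕ) (hk : 1 ≤ k)
    (A : Type*) [Ring A] [Algebra ℝ A]
    (d : A →ₗ[ℝ] A)
    (η : ℕ → A)
    (hanti : ∀ i j, η i * η j = -(η j * η i))
    (hleib : ∀ i j, d (η i * η j) = d (η i) * η j - η i * d (η j))
    (hMC : ∀ r, 1 ≤ r → r < k →
      d (η r) + (2⁻¹ : ℝ) •
        ∑ i ∈ Finset.Ioo 0 r, ((r : ℝ) - 2 * (i : ℝ)) • (η i * η (r - i)) = 0) :
    d ((2⁻¹ : ℝ) •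
        ∑ i ∈ Finset.Ioo 0 k, ((k : ℝ) - 2 * (i : ℝ)) • (η i * η (k - i))) = 0 := by
  classical
  have hMC' : ∀ r, 1 ≤ r → r < k →
      d (η r) = -((2⁻¹ : ℝ) •
        ∑ i ∈ Finset.Ioo 0 r, ((r : ℝ) - 2 * (i : ℝ)) • (η i * η (r - i))) :=
    fun r h1 h2 => eq_neg_of_add_eq_zero_left (hMC r h1 h2)
  have hcyc : ∀ a b c : ℕ, η b * η c * η a = η a * η b * η c := by
    intro a b c
    rw [mul_assoc, hanti c a, mul_neg, ← mul_assoc, hanti b a, neg_mul, neg_neg, mul_assoc]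
  -- the index set of triples (a, b, k-a-b)
  set T : Finset (ℕ × ℕ) :=
    (Finset.Ioo 0 k ×ˢ Finset.Ioo 0 k).filter (fun p => p.1 + p.2 < k) with hTdef
  have memT : ∀ p : ℕ × ℕ, p ∈ T ↔ (0 < p.1 ∧ 0 < p.2 ∧ p.1 + p.2 < k) := by
    intro p
    simp only [hTdef, Finset.mem_filter, Finset.mem_product, Finset.mem_Ioo]
    omega
  -- the triple product
  set w : ℕ × ℕ → A := fun p => η p.1 * η p.2 * η (k - p.1 - p.2) with hwdef
  -- the cyclic rotation
  set τ : ℕ × ℕ → ℕ × ℕ := fun p => (p.2, k - p.1 - p.2) with hτdef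
  have hτT : ∀ p ∈ T, τ p ∈ T := by
    intro p hp
    rw [memT] at hp ⊢
    simp only [hτdef]
    omega
  have hwτ : ∀ p ∈ T, w (τ p) = w p := by
    intro p hp
    rw [memT] at hp
    simp only [hwdef, hτdef]
    have h3 : k - p.2 - (k - p.1 - p.2) = p.1 := by omega
    rw [h3]
    exact hcyc p.1 p.2 (k - p.1 - p.2)
  -- reindexing by the cyclic rotation
  have reidx : ∀ G : ℕ × ℕ → A, ∑ p ∈ T, G p = ∑ p ∈ T, G (τ p) := by
    intro G
    refine Finset.sum_nbij' (fun p => (k - p.1 - p.2, p.1)) τ ?_ ?_ ?_ ?_ ?_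
    · intro p hp; rw [memT] at hp ⊢; simp only []; omega
    · exact hτT
    · intro p hp; rw [memT] at hp; simp only [hτdef]
      ext <;> simp <;> omega
    · intro p hp; rw [memT] at hp; simp only [hτdef]
      ext <;> simp <;> omega
    · intro p hp; rw [memT] at hp
      have : τ (k - p.1 - p.2, p.1) = p := by
        simp only [hτdef]; ext <;> simp <;> omega
      rw [this]
  -- the combined coefficient
  set F : ℕ × ℕ → ℝ := fun p =>
    2⁻¹ * ((k : ℝ) - 2 * p.1) * ((↑(k - p.1) : ℝ) - 2 * p.2)
    - 2⁻¹ * ((k : ℝ) - 2 * (↑(p.1 + p.2) : ℝ)) * ((↑(p.1 + p.2) : ℝ) - 2 * p.1) with hFdef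
  -- pointwise cyclic vanishing of the coefficient
  have hFcyc : ∀ p ∈ T, F p + F (τ p) + F (τ (τ p)) = 0 := by
    intro p hp
    rw [memT] at hp
    obtain ⟨a, b⟩ := p
    simp only at hp
    have hττ : τ (τ (a, b)) = (k - a - b, a) := by
      simp only [hτdef]; ext <;> simp <;> omega
    rw [hττ]
    simp only [hFdef, hτdef]
    have e1 : k - a = b + (k - a - b) := by omega
    have e2 : k - b = a + (k - a - b) := by omega
    have e3 : k - (k - a - b) = a + b := by omega
    have e4 : b + (k - a - b) = k - a := by omega
    have e5 : (k - a - b) + a = k - b := by omega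
    set c := k - a - b with hcdef
    have r1 : k - a = b + c := by omega
    have r2 : k - b = a + c := by omega
    have r3 : k - c = a + b := by omega
    rw [r1, r2, r3]
    have hks : k = a + b + c := by omega
    have hk' : (k : ℝ) = (a : ℝ) + b + c := by exact_mod_cast hks
    push_cast
    rw [hk']
    ring
  -- expand the differential of each summand using Leibniz + Maurer-Cartan
  have claim1 : ∀ i ∈ Finset.Ioo 0 k,
      ((k : ℝ) - 2 * (i : ℝ)) • d (η i * η (k - i)) =
        (∑ b ∈ Finset.Ioo 0 (k - i),
          (2⁻¹ * ((k : ℝ) - 2 * (i : ℝ)) * ((↑(k - i) : ℝ) - 2 * (b : ℝ))) •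
            (η i * (η b * η (k - i - b))))
        - ∑ a ∈ Finset.Ioo 0 i,
          (2⁻¹ * ((k : ℝ) - 2 * (↑(a + (i - a)) : ℝ)) * ((↑(a + (i - a)) : ℝ) - 2 * (a : ℝ))) •
            (η a * η (i - a) * η (k - i)) := by
    intro i hi
    simp only [Finset.mem_Ioo] at hi
    have h1 : 1 ≤ i := hi.1
    have h2 : i < k := hi.2
    rw [hleib, hMC' i h1 h2, hMC' (k - i) (by omega) (by omega)]
    simp only [neg_mul, mul_neg, sub_neg_eq_add, smul_mul_assoc, mul_smul_comm,
      Finset.sum_mul, Finset.mul_sum, smul_add, smul_neg, Finset.smul_sum, smul_smul]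
    rw [neg_add_eq_sub]
    congr 1
    · refine Finset.sum_congr rfl fun b hb => ?_
      congr 1
      ring
    · refine Finset.sum_congr rfl fun a ha => ?_
      simp only [Finset.mem_Ioo] at ha
      rw [show a + (i - a) = i from by omega]
      congr 1
      ring
  -- reindex the two double sums over the triangle T
  have hB : (∑ i ∈ Finset.Ioo 0 k, ∑ b ∈ Finset.Ioo 0 (k - i),
        (2⁻¹ * ((k : ℝ) - 2 * (i : ℝ)) * ((↑(k - i) : ℝ) - 2 * (b : ℝ))) •
          (η i * (η b * η (k - i - b))))
      = ∑ p ∈ T, (2⁻¹ * ((k : ℝ) - 2 * (p.1 : ℝ)) * ((↑(k - p.1) : ℝ) - 2 * (p.2 : ℝ))) • w p := by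
    rw [Finset.sum_sigma']
    refine Finset.sum_nbij' (fun x => (x.1, x.2)) (fun p => ⟨p.1, p.2⟩) ?_ ?_ ?_ ?_ ?_
    · intro x hx
      simp only [Finset.mem_sigma, Finset.mem_Ioo] at hx
      rw [memT]
      simp only []
      omega
    · intro p hp
      rw [memT] at hp
      simp only [Finset.mem_sigma, Finset.mem_Ioo]
      omega
    · intro x _; rfl
    · intro p _; rfl
    · intro x _
      simp only [hwdef]
      exact congrArg _ (mul_assoc _ _ _).symm
  have hA : (∑ i ∈ Finset.Ioo 0 k, ∑ a ∈ Finset.Ioo 0 i,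
        (2⁻¹ * ((k : ℝ) - 2 * (↑(a + (i - a)) : ℝ)) * ((↑(a + (i - a)) : ℝ) - 2 * (a : ℝ))) •
          (η a * η (i - a) * η (k - i)))
      = ∑ p ∈ T, (2⁻¹ * ((k : ℝ) - 2 * (↑(p.1 + p.2) : ℝ)) * ((↑(p.1 + p.2) : ℝ) - 2 * (p.1 : ℝ))) • w p := by
    rw [Finset.sum_sigma']
    refine Finset.sum_nbij' (fun x => (x.2, x.1 - x.2)) (fun p => ⟨p.1 + p.2, p.1⟩) ?_ ?_ ?_ ?_ ?_
    · intro x hx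
      simp only [Finset.mem_sigma, Finset.mem_Ioo] at hx
      rw [memT]
      simp only []
      omega
    · intro p hp
      rw [memT] at hp
      simp only [Finset.mem_sigma, Finset.mem_Ioo]
      omega
    · intro x hx
      simp only [Finset.mem_sigma, Finset.mem_Ioo] at hx
      obtain ⟨i, a⟩ := x
      simp only [] at hx
      have h : a + (i - a) = i := by omega
      simp [h]
    · intro p hp
      rw [memT] at hp
      have h : p.1 + p.2 - p.1 = p.2 := by omega
      simp [h]
    · intro x hx
      simp only [Finset.mem_sigma, Finset.mem_Ioo] at hx
      simp only [hwdef]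
      rw [show x.2 + (x.1 - x.2) = x.1 from by omega,
          show k - x.2 - (x.1 - x.2) = k - x.1 from by omega]
  -- assemble
  rw [map_smul, map_sum]
  rw [Finset.sum_congr rfl fun i hi => (map_smul d _ _).trans (claim1 i hi),
      Finset.sum_sub_distrib, hB, hA, ← Finset.sum_sub_distrib]
  simp only [← sub_smul]
  show (2⁻¹ : ℝ) • ∑ p ∈ T, F p • w p = 0
  -- the cyclic trick
  have hS1 : ∑ p ∈ T, F p • w p = ∑ p ∈ T, F (τ p) • w p := by
    rw [reidx (fun p => F p • w p)]
    exact Finset.sum_congr rfl fun p hp => by rw [hwτ p hp]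
  have hS2 : ∑ p ∈ T, F (τ p) • w p = ∑ p ∈ T, F (τ (τ p)) • w p := by
    rw [reidx (fun p => F (τ p) • w p)]
    exact Finset.sum_congr rfl fun p hp => by rw [hwτ p hp]
  have hzero : (∑ p ∈ T, F p • w p) + (∑ p ∈ T, F (τ p) • w p)
      + (∑ p ∈ T, F (τ (τ p)) • w p) = 0 := by
    rw [← Finset.sum_add_distrib, ← Finset.sum_add_distrib]
    refine Finset.sum_eq_zero fun p hp => ?_
    rw [← add_smul, ← add_smul, hFcyc p hp, zero_smul]
  have h3S : (3 : ℝ) • (∑ p ∈ T, F p • w p) = 0 := by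
    calc (3 : ℝ) • (∑ p ∈ T, F p • w p)
        = (∑ p ∈ T, F p • w p) + (∑ p ∈ T, F (τ p) • w p)
          + (∑ p ∈ T, F (τ (τ p)) • w p) := by
          rw [← hS1, ← hS1.trans hS2, show (3 : ℝ) = 1 + 1 + 1 from by norm_num,
            add_smul, add_smul, one_smul]
      _ = 0 := hzero
  have hS0 : ∑ p ∈ T, F p • w p = 0 := by
    have h9 : (∑ p ∈ T, F p • w p) = ((3 : ℝ)⁻¹ * 3) • (∑ p ∈ T, F p • w p) := by
      norm_num
    rw [h9, mul_smul, h3S, smul_zero]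
  rw [hS0, smul_zero]
end

section
/- In the graded-commutative algebra S_k = ⊕_{r=0}^{k} R[x_0,...,x_{k-1}] t_r over CE(g_k), with t_r of degree 1, differential d t_r = Σ_{i=0}^{r-1} (i - r) x_i t_{r-i}, and product t_s * t_r = Σ_{i=s}^{r-1} x_i t_{r+s-i} for s < r, and t_s * t_s = 0, the differential squares to zero on each generator t_r: d(d t_r) = 0. -/
/-!
STATEMENT 7: In the graded-commutative algebra
`S_k = ⊕_{r=0}^k ℝ[x_0, …, x_{k-1}] t_r` over `CE(g_k)`, with `t_r` of
degree 1, differential `d t_r = ∑_{i=0}^{r-1} (i - r) x_i t_{r-i}` (and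
`d x_r = ∑_{i=1}^{r} i x_i ∧ x_{r-i}` on `CE(g_k)`), the differential
squares to zero on each generator `t_r`:
`d (d t_r) = ∑_{i=0}^{r-1} (i-r) ((d x_i) t_{r-i} - x_i d t_{r-i}) = 0`.
We model `ℝ[x_0, …, x_{k-1}]` (degree-1 anticommuting generators) by the
exterior algebra `A`, and `S_k` by the free `A`-module `ℕ → A` with basis
`t_r = Pi.single r 1`.
-/

noncomputable section

/-- The degree-1 generators `x_0, …, x_{k-1}` of `CE(g_k)` (and `0` outside
this range), modelled in the exterior algebra. -/
def xg (k i : ℕ) : ExteriorAlgebra ℝ (ℕ →₀ ℝ) :=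
  if i < k then ExteriorAlgebra.ι ℝ (Finsupp.single i 1) else 0

/-- The Chevalley–Eilenberg differential of `g_k` on generators:
`d x_r = ∑_{i=1}^{r} i x_i ∧ x_{r-i}`. -/
def dxg (k r : ℕ) : ExteriorAlgebra ℝ (ℕ →₀ ℝ) :=
  ∑ i ∈ Finset.range (r + 1), (i : ℝ) • (xg k i * xg k (r - i))

/-- The generator `t_r` of `S_k`, as the `r`-th basis vector of the free
module `ℕ → A`. -/
def tg (r : ℕ) : ℕ → ExteriorAlgebra ℝ (ℕ →₀ ℝ) := Pi.single r 1

/-- `d t_r = ∑_{i=0}^{r-1} (i - r) x_i t_{r-i}`; its component at `t_m`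
(for `1 ≤ m ≤ r`) is `(-m) • x_{r-m}`. -/
def dtg (k r : ℕ) : ℕ → ExteriorAlgebra ℝ (ℕ →₀ ℝ) :=
  fun m => if 1 ≤ m ∧ m ≤ r then (-(m : ℝ)) • xg k (r - m) else 0

lemma xg_anticomm (k a b : ℕ) : xg k a * xg k b = -(xg k b * xg k a) := by
  unfold xg
  split_ifs with h1 h2 h2
  · exact eq_neg_of_add_eq_zero_left (ExteriorAlgebra.ι_add_mul_swap _ _)
  all_goals simp

lemma sum_xg (k n : ℕ) : ∑ i ∈ Finset.range (n+1), xg k i * xg k (n - i) = 0 := by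
  set S := ∑ i ∈ Finset.range (n+1), xg k i * xg k (n - i) with hS
  have h : S = -S := by
    conv_lhs => rw [hS, ← Finset.sum_range_reflect]
    rw [hS, ← Finset.sum_neg_distrib]
    apply Finset.sum_congr rfl
    intro i hi
    have hi' : i ≤ n := Nat.lt_succ_iff.mp (Finset.mem_range.mp hi)
    have e : n + 1 - 1 - i = n - i := by omega
    rw [e, Nat.sub_sub_self hi']
    exact xg_anticomm k (n - i) i
  have h2 : (2:ℝ) • S = 0 := by
    rw [two_smul]; nth_rewrite 1 [h]; exact neg_add_cancel S
  rcases smul_eq_zero.mp h2 with h | h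
  · norm_num at h
  · exact h

/-- `d(d t_r) = 0` in `S_k`, for every generator `t_r`, `0 ≤ r ≤ k`. -/
theorem stmt7 (k r : ℕ) (hr : r ≤ k) :
    (∑ i ∈ Finset.range r, ((i : ℝ) - (r : ℝ)) •
      ((fun m => dxg k i * tg (r - i) m) - (fun m => xg k i * dtg k (r - i) m)))
    = (0 : ℕ → ExteriorAlgebra ℝ (ℕ →₀ ℝ)) := by
  funext m
  simp only [Finset.sum_apply, Pi.smul_apply, Pi.sub_apply, Pi.zero_apply, tg, dtg,
    Pi.single_apply]
  by_cases hm : 1 ≤ m ∧ m ≤ r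
  · obtain ⟨hm1, hm2⟩ := hm
    set n := r - m with hn
    have hnr : n + 1 ≤ r := by omega
    have e1 : ∑ i ∈ Finset.range r, ((i:ℝ) - r) •
        (dxg k i * if m = r - i then (1 : ExteriorAlgebra ℝ (ℕ →₀ ℝ)) else 0)
        = (-(m:ℝ)) • dxg k n := by
      rw [Finset.sum_congr rfl
        (g := fun i => if i = n then ((i:ℝ) - r) • dxg k i else 0) (fun i hi => ?_)]
      · rw [Finset.sum_ite_eq' (Finset.range r) n, if_pos (Finset.mem_range.mpr (by omega))]
        congr 1
        rw [hn, Nat.cast_sub hm2]; ring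
      · have hi' := Finset.mem_range.mp hi
        show _ = if i = n then ((i:ℝ) - (r:ℝ)) • dxg k i else 0
        by_cases h : i = n
        · rw [if_pos h, if_pos (by omega), mul_one]
        · rw [if_neg h, if_neg (by omega), mul_zero, smul_zero]
    have e2 : ∑ i ∈ Finset.range r, ((i:ℝ) - r) •
        (xg k i * if 1 ≤ m ∧ m ≤ r - i then (-(m:ℝ)) • xg k (r - i - m) else 0)
        = ∑ i ∈ Finset.range (n+1), ((m:ℝ) * ((r:ℝ) - i)) • (xg k i * xg k (n - i)) := by
      rw [← Finset.sum_subset (Finset.range_subset_range.mpr hnr) (fun i hir hin => ?_)]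
      · apply Finset.sum_congr rfl
        intro i hi
        have hi' : i ≤ n := Nat.lt_succ_iff.mp (Finset.mem_range.mp hi)
        rw [if_pos ⟨hm1, by omega⟩]
        have e : r - i - m = n - i := by omega
        rw [e, mul_smul_comm, smul_smul]
        congr 1; ring
      · have hin' : ¬ i < n + 1 := by simpa using hin
        rw [if_neg (by omega), mul_zero, smul_zero]
    calc ∑ i ∈ Finset.range r, ((i:ℝ) - r) •
          ((dxg k i * if m = r - i then (1 : ExteriorAlgebra ℝ (ℕ →₀ ℝ)) else 0)
            - xg k i * if 1 ≤ m ∧ m ≤ r - i then (-(m:ℝ)) • xg k (r - i - m) else 0)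
        = (∑ i ∈ Finset.range r, ((i:ℝ) - r) •
            (dxg k i * if m = r - i then (1 : ExteriorAlgebra ℝ (ℕ →₀ ℝ)) else 0))
          - ∑ i ∈ Finset.range r, ((i:ℝ) - r) •
            (xg k i * if 1 ≤ m ∧ m ≤ r - i then (-(m:ℝ)) • xg k (r - i - m) else 0) := by
          rw [← Finset.sum_sub_distrib]
          exact Finset.sum_congr rfl fun i _ => smul_sub _ _ _
      _ = 0 := by
          rw [e1, e2, dxg, Finset.smul_sum, ← Finset.sum_sub_distrib]
          rw [Finset.sum_congr rfl (g := fun i => (-(m:ℝ) * r) • (xg k i * xg k (n - i)))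
            (fun i _ => by rw [smul_smul, ← sub_smul]; congr 1; ring)]
          rw [← Finset.smul_sum, sum_xg, smul_zero]
  · apply Finset.sum_eq_zero
    intro i hi
    have hi' : i < r := Finset.mem_range.mp hi
    rw [if_neg (by omega), if_neg (by omega), mul_zero, mul_zero, sub_zero, smul_zero]
end
end
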